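/- arXiv:1401.7540 — 3 statements merged into one kernel-verified Lean document; each statement's English description precedes it below -/
import Mathlib

section
/- Every graph G admits a nice treedepth decomposition of height exactly td(G); that is, a treedepth decomposition T with V(T) = V(G) such that for every node x of T, the subgraph of G induced by the vertex set of the subtree of T rooted at x is connected. -/
/-- A rooted forest on vertex type `V`, given by a parent function together with
a depth function certifying acyclicity (roots have depth 1). -/
structure RootedForest (V : Type) where
  parent : V → Option V
  depth : V → ℕ
  depth_root : ∀ v, parent v = none → depth v = 1
  depth_child : ∀ v u, parent v = some u → depth v = depth u + 1

namespace RootedForest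

variable {V : Type}

/-- `F.Ancestor u v` : `u` is a strict ancestor of `v` in the forest `F`. -/
def Ancestor (F : RootedForest V) (u v : V) : Prop :=
  Relation.TransGen (fun a b : V => F.parent a = some b) v u

/-- Height of the forest: the maximum number of nodes on a root-to-leaf path,
equivalently the maximum depth of a node. -/
noncomputable def height (F : RootedForest V) : ℕ :=
  sSup (Set.range F.depth)

/-- The node set of the subtree of `F` rooted at `x` (including `x` itself). -/
def subtreeSet (F : RootedForest V) (x : V) : Set V :=
  {v | v = x ∨ F.Ancestor x v}

/-- `F` is a treedepth decomposition of `G`: every edge of `G` joins an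
ancestor-descendant pair of `F`. -/
def IsTreedepthDecomp (F : RootedForest V) (G : SimpleGraph V) : Prop :=
  ∀ ⦃u v⦄, G.Adj u v → F.Ancestor u v ∨ F.Ancestor v u

end RootedForest

/-- The treedepth of `G`: the minimum height of a treedepth decomposition of `G`. -/
noncomputable def SimpleGraph.treedepth {V : Type} (G : SimpleGraph V) : ℕ :=
  sInf {h | ∃ F : RootedForest V, F.IsTreedepthDecomp G ∧ F.height = h}

/-!
Order the vertices injectively by a rank function. In the elimination forest of this order, the
ancestors of `v` are the lower-ranked `u` from which `v` can be reached through vertices of rank at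
least that of `u`, and the parent is the highest-ranked of them. Its subtree at `x` is then the
set of vertices reachable from `x` above the rank of `x`, which induces a connected subgraph, and
every edge joins an ancestor-descendant pair. If the rank extends the depth of an optimal
decomposition `F`, then every vertex reachable from `u` above its rank is a descendant of `u` in
`F`, so the elimination forest is no deeper than `F` anywhere.
-/

open Function

namespace RootedForest

variable {V : Type} (F : RootedForest V)

lemma depth_lt_of_ancestor {a v : V} (h : F.Ancestor a v) : F.depth a < F.depth v := by
  induction h with
  | single h => have := F.depth_child _ _ h; omega
  | tail _ h _ => have := F.depth_child _ _ h; omega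

lemma one_le_depth (v : V) : 1 ≤ F.depth v := by
  cases h : F.parent v with
  | none => rw [F.depth_root v h]
  | some u => rw [F.depth_child v u h]; omega

lemma ancestor_total {a b v : V} (ha : F.Ancestor a v) (hb : F.Ancestor b v) :
    a = b ∨ F.Ancestor a b ∨ F.Ancestor b a := by
  have hU : Relator.RightUnique (fun a b : V => F.parent a = some b) :=
    fun _ _ _ h₁ h₂ => Option.some.inj (h₁.symm.trans h₂)
  rcases Relation.ReflTransGen.total_of_right_unique hU ha.to_reflTransGen hb.to_reflTransGen
    with h | h <;> rcases Relation.reflTransGen_iff_eq_or_transGen.mp h with h | h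
  · exact Or.inl h.symm
  · exact Or.inr (Or.inr h)
  · exact Or.inl h
  · exact Or.inr (Or.inl h)

lemma depth_le_of_parent_ancestor {T : RootedForest V}
    (h : ∀ v u, T.parent v = some u → F.Ancestor u v) (v : V) : T.depth v ≤ F.depth v := by
  induction hn : T.depth v generalizing v with
  | zero => have := T.one_le_depth v; omega
  | succ n ih =>
    cases hp : T.parent v with
    | none => have := F.one_le_depth v; have := T.depth_root v hp; omega
    | some u =>
      have := T.depth_child v u hp
      have := ih u (by omega)
      have := F.depth_lt_of_ancestor (h v u hp)
      omega

lemma height_le_height [Finite V] {T : RootedForest V} (h : ∀ v, T.depth v ≤ F.depth v) :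
    T.height ≤ F.height :=
  ciSup_mono (Set.finite_range _).bddAbove h

lemma exists_injective_extending_depth [Finite V] :
    ∃ rank : V → ℕ, Injective rank ∧
      ∀ u v, F.depth u < F.depth v → rank u < rank v := by
  obtain ⟨n, ⟨e⟩⟩ := Finite.exists_equiv_fin V
  refine ⟨fun v => F.depth v * n + e v, fun u v huv => e.injective (Fin.ext ?_),
    fun u v h => ?_⟩
  · simpa [Nat.mul_add_mod, Nat.mod_eq_of_lt (e u).isLt, Nat.mod_eq_of_lt (e v).isLt]
      using congrArg (· % n) huv
  · calc F.depth u * n + e u < (F.depth u + 1) * n := by have := (e u).isLt; nlinarith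
      _ ≤ F.depth v * n := Nat.mul_le_mul_right _ h
      _ ≤ F.depth v * n + e v := Nat.le_add_right _ _

end RootedForest

namespace SimpleGraph

variable {V : Type}

lemma induce_setOf_reachable_connected {G H : SimpleGraph V} (hHG : H ≤ G) (x : V) :
    (G.induce {v | H.Reachable x v}).Connected := by
  have hsupp : (H.connectedComponentMk x).supp = {v | H.Reachable x v} := by
    ext v
    exact ConnectedComponent.eq.trans ⟨Reachable.symm, Reachable.symm⟩
  rw [← hsupp]
  exact (H.connectedComponentMk x).connected_toSimpleGraph.mono fun _ _ h => hHG h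

variable (G : SimpleGraph V) (rank : V → ℕ)

def above (k : ℕ) : SimpleGraph V where
  Adj a b := G.Adj a b ∧ k ≤ rank a ∧ k ≤ rank b
  symm := ⟨fun _ _ h => ⟨h.1.symm, h.2.2, h.2.1⟩⟩
  loopless := ⟨fun _ h => h.1.ne rfl⟩

lemma above_le (k : ℕ) : G.above rank k ≤ G := fun _ _ h => h.1

lemma above_anti {k l : ℕ} (h : k ≤ l) : G.above rank l ≤ G.above rank k :=
  fun _ _ h' => ⟨h'.1, h.trans h'.2.1, h.trans h'.2.2⟩

variable {G rank}

lemma le_rank_of_reachable_above {k : ℕ} {u v : V} (hu : k ≤ rank u)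
    (h : (G.above rank k).Reachable u v) : k ≤ rank v := by
  rw [reachable_iff_reflTransGen] at h
  induction h with
  | refl => exact hu
  | tail _ hbc _ => exact hbc.2.2

variable (G rank) [Fintype V]

open scoped Classical in
noncomputable def elimAncestors (v : V) : Finset V :=
  {u | rank u < rank v ∧ (G.above rank (rank u)).Reachable u v}

variable {G rank}

lemma mem_elimAncestors {u v : V} :
    u ∈ G.elimAncestors rank v ↔ rank u < rank v ∧ (G.above rank (rank u)).Reachable u v := by
  simp [elimAncestors]

lemma elimAncestors_trans {w u v : V} (hw : w ∈ G.elimAncestors rank u)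
    (hu : u ∈ G.elimAncestors rank v) : w ∈ G.elimAncestors rank v := by
  rw [mem_elimAncestors] at *
  exact ⟨hw.1.trans hu.1, hw.2.trans (hu.2.mono (G.above_anti rank hw.1.le))⟩

lemma mem_elimAncestors_of_rank_lt {w u v : V} (hw : w ∈ G.elimAncestors rank v)
    (hu : u ∈ G.elimAncestors rank v) (hlt : rank w < rank u) : w ∈ G.elimAncestors rank u := by
  rw [mem_elimAncestors] at *
  exact ⟨hlt, hw.2.trans (hu.2.symm.mono (G.above_anti rank hlt.le))⟩

variable (G rank)

noncomputable def elimParent (v : V) : Option V :=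
  if h : (G.elimAncestors rank v).Nonempty then
    some ((G.elimAncestors rank v).exists_max_image rank h).choose
  else none

variable {G rank}

lemma elimParent_spec {u v : V} (h : G.elimParent rank v = some u) :
    u ∈ G.elimAncestors rank v ∧ ∀ w ∈ G.elimAncestors rank v, rank w ≤ rank u := by
  unfold elimParent at h
  split_ifs at h with hne
  cases h
  exact ((G.elimAncestors rank v).exists_max_image rank hne).choose_spec

lemma elimAncestors_eq_empty {v : V} (h : G.elimParent rank v = none) :
    G.elimAncestors rank v = ∅ := by
  unfold elimParent at h
  split_ifs at h with hne
  exact Finset.not_nonempty_iff_eq_empty.mp hne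

lemma exists_elimParent_eq_some {u v : V} (hu : u ∈ G.elimAncestors rank v) :
    ∃ p, G.elimParent rank v = some p := by
  unfold elimParent
  rw [dif_pos ⟨u, hu⟩]
  exact ⟨_, rfl⟩

lemma elimAncestors_eq_insert [DecidableEq V] (hinj : Injective rank) {u v : V}
    (h : G.elimParent rank v = some u) :
    G.elimAncestors rank v = insert u (G.elimAncestors rank u) := by
  obtain ⟨hu, hmax⟩ := elimParent_spec h
  ext w
  rw [Finset.mem_insert]
  refine ⟨fun hw => ?_, ?_⟩
  · rcases eq_or_ne w u with rfl | hwu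
    · exact Or.inl rfl
    · exact Or.inr (mem_elimAncestors_of_rank_lt hw hu
        ((hmax w hw).lt_of_ne (hinj.ne hwu)))
  · rintro (rfl | hw)
    · exact hu
    · exact elimAncestors_trans hw hu

lemma notMem_elimAncestors_self (v : V) : v ∉ G.elimAncestors rank v :=
  fun h => (mem_elimAncestors.mp h).1.false

variable (G) in
noncomputable def elimForest (hinj : Injective rank) : RootedForest V where
  parent := G.elimParent rank
  depth v := (G.elimAncestors rank v).card + 1
  depth_root v h := by rw [elimAncestors_eq_empty h, Finset.card_empty]
  depth_child v u h := by
    classical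
    rw [elimAncestors_eq_insert hinj h,
      Finset.card_insert_of_notMem (notMem_elimAncestors_self u)]

variable {hinj : Injective rank}

lemma elimForest_ancestor_iff {u v : V} :
    (G.elimForest hinj).Ancestor u v ↔ u ∈ G.elimAncestors rank v := by
  refine ⟨fun h => ?_, fun h => ?_⟩
  · induction h with
    | single h => exact (elimParent_spec h).1
    | tail _ h ih => exact elimAncestors_trans (elimParent_spec h).1 ih
  · classical
    induction hn : rank v using Nat.strong_induction_on generalizing v with
    | _ n ih =>
    obtain ⟨p, hp⟩ := exists_elimParent_eq_some h
    rw [elimAncestors_eq_insert hinj hp, Finset.mem_insert] at h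
    rcases h with rfl | h
    · exact .single hp
    · exact .head hp (ih _ (hn ▸ (mem_elimAncestors.mp (elimParent_spec hp).1).1) h rfl)

lemma elimForest_subtreeSet (x : V) :
    (G.elimForest hinj).subtreeSet x = {v | (G.above rank (rank x)).Reachable x v} := by
  ext v
  simp only [RootedForest.subtreeSet, elimForest_ancestor_iff, mem_elimAncestors,
    Set.mem_ofPred_eq]
  refine ⟨?_, fun h => ?_⟩
  · rintro (rfl | h)
    · rfl
    · exact h.2
  · rcases eq_or_ne v x with rfl | hvx
    · exact Or.inl rfl
    · exact Or.inr ⟨(le_rank_of_reachable_above le_rfl h).lt_of_ne (hinj.ne hvx.symm), h⟩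

lemma elimForest_isTreedepthDecomp : (G.elimForest hinj).IsTreedepthDecomp G := by
  intro u v huv
  simp only [elimForest_ancestor_iff, mem_elimAncestors]
  rcases (hinj.ne huv.ne).lt_or_gt with h | h
  · exact Or.inl ⟨h, Adj.reachable ⟨huv, le_rfl, h.le⟩⟩
  · exact Or.inr ⟨h, Adj.reachable ⟨huv.symm, le_rfl, h.le⟩⟩

lemma elimForest_induce_subtreeSet_connected (x : V) :
    (G.induce ((G.elimForest hinj).subtreeSet x)).Connected := by
  rw [elimForest_subtreeSet]
  exact induce_setOf_reachable_connected (G.above_le rank _) x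

end SimpleGraph

namespace RootedForest.IsTreedepthDecomp

variable {V : Type} {G : SimpleGraph V} {F : RootedForest V} {rank : V → ℕ}

lemma eq_or_ancestor_of_reachable_above (hF : F.IsTreedepthDecomp G)
    (hrank : ∀ a b, F.depth a < F.depth b → rank a < rank b) {u v : V}
    (h : (G.above rank (rank u)).Reachable u v) : v = u ∨ F.Ancestor u v := by
  rw [SimpleGraph.reachable_iff_reflTransGen] at h
  induction h with
  | refl => exact Or.inl rfl
  | @tail b c _ hbc ih =>
    obtain ⟨hadj, -, hc⟩ := hbc
    have not_above : ¬ F.Ancestor c u := fun h =>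
      (hrank _ _ (F.depth_lt_of_ancestor h)).not_ge hc
    rcases ih with rfl | hub <;> rcases hF hadj with hbc | hcb
    · exact Or.inr hbc
    · exact absurd hcb not_above
    · exact Or.inr (hbc.trans hub)
    · rcases F.ancestor_total hub hcb with rfl | huc | hcu
      · exact Or.inl rfl
      · exact Or.inr huc
      · exact absurd hcu not_above

lemma elimForest_parent_ancestor [Fintype V] (hF : F.IsTreedepthDecomp G)
    (hinj : Function.Injective rank) (hrank : ∀ a b, F.depth a < F.depth b → rank a < rank b)
    {u v : V} (h : (G.elimForest hinj).parent v = some u) : F.Ancestor u v := by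
  obtain ⟨hlt, hreach⟩ := SimpleGraph.mem_elimAncestors.mp (SimpleGraph.elimParent_spec h).1
  exact (hF.eq_or_ancestor_of_reachable_above hrank hreach).resolve_left
    fun hvu => hlt.ne' (congrArg rank hvu)

end RootedForest.IsTreedepthDecomp

lemma SimpleGraph.treedepth_le_height {V : Type} {G : SimpleGraph V} {T : RootedForest V}
    (hT : T.IsTreedepthDecomp G) : G.treedepth ≤ T.height :=
  Nat.sInf_le ⟨T, hT, rfl⟩

lemma SimpleGraph.exists_isTreedepthDecomp_height_eq_treedepth {V : Type} [Fintype V]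
    (G : SimpleGraph V) :
    ∃ F : RootedForest V, F.IsTreedepthDecomp G ∧ F.height = G.treedepth :=
  Nat.sInf_mem (s := {h | ∃ F : RootedForest V, F.IsTreedepthDecomp G ∧ F.height = h})
    ⟨_, _, G.elimForest_isTreedepthDecomp
      (hinj := Fin.val_injective.comp (Fintype.equivFin V).injective), rfl⟩

theorem stmt5_general {V : Type} [Fintype V] (G : SimpleGraph V) :
    ∃ T : RootedForest V, T.IsTreedepthDecomp G ∧
      (∀ x : V, (G.induce (T.subtreeSet x)).Connected) ∧
      T.height = G.treedepth := by
  obtain ⟨F, hF, hFh⟩ := G.exists_isTreedepthDecomp_height_eq_treedepth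
  obtain ⟨rank, hinj, hrank⟩ := F.exists_injective_extending_depth
  have hT := G.elimForest_isTreedepthDecomp (hinj := hinj)
  refine ⟨G.elimForest hinj, hT, G.elimForest_induce_subtreeSet_connected,
    le_antisymm ?_ (SimpleGraph.treedepth_le_height hT)⟩
  rw [← hFh]
  exact F.height_le_height <| F.depth_le_of_parent_ancestor fun _ _ h =>
    hF.elimForest_parent_ancestor hinj hrank h

/-- Every graph `G` admits a nice treedepth decomposition of height exactly `td(G)`:
a treedepth decomposition `T` (on the vertex set of `G`) such that for every node `x`,
the subgraph of `G` induced by the subtree of `T` rooted at `x` is connected. -/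
theorem stmt5 {V : Type} [Fintype V] [DecidableEq V] (G : SimpleGraph V) :
    ∃ T : RootedForest V, T.IsTreedepthDecomp G ∧
      (∀ x : V, (G.induce (T.subtreeSet x)).Connected) ∧
      T.height = G.treedepth :=
  stmt5_general G
end

section
/- Let T be a nice treedepth decomposition of a graph G and let x be a non-leaf node of T with a child y. Then there exists an edge in G between x and some vertex of the subtree of T rooted at y. -/
section Aux

variable {V : Type}

private lemma anc_depth (T : RootedForest V) {u v : V} (h : T.Ancestor u v) :
    T.depth u < T.depth v := by
  induction h with
  | single h => exact by rw [T.depth_child _ _ h]; omega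
  | tail _ h ih => rw [T.depth_child _ _ h] at ih; omega

private lemma anc_trans (T : RootedForest V) {u v w : V} (h1 : T.Ancestor u v)
    (h2 : T.Ancestor v w) : T.Ancestor u w := Relation.TransGen.trans h2 h1

private lemma anc_comparable (T : RootedForest V) {v y w : V}
    (h1 : T.Ancestor v w) (h2 : T.Ancestor y w) :
    v = y ∨ T.Ancestor v y ∨ T.Ancestor y v := by
  have U : Relator.RightUnique (fun a b : V => T.parent a = some b) := by
    intro a b c hb hc; rw [hb] at hc; exact Option.some.inj hc
  have := Relation.ReflTransGen.total_of_right_unique U h1.to_reflTransGen h2.to_reflTransGen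
  rcases this with h | h <;> rw [Relation.reflTransGen_iff_eq_or_transGen] at h
  · rcases h with h | h
    · exact Or.inl h.symm
    · exact Or.inr (Or.inr h)
  · rcases h with h | h
    · exact Or.inl h
    · exact Or.inr (Or.inl h)

end Aux

/-- Let `T` be a nice treedepth decomposition of `G` and let `x` be a non-leaf node of `T`
with a child `y`.  Then there is an edge of `G` between `x` and some vertex of the subtree
of `T` rooted at `y`. -/
theorem stmt6 {V : Type} [Fintype V] (G : SimpleGraph V) (T : RootedForest V)
    (hT : T.IsTreedepthDecomp G)
    (hnice : ∀ x : V, (G.induce (T.subtreeSet x)).Connected)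
    (x y : V) (hy : T.parent y = some x) :
    ∃ c ∈ T.subtreeSet y, G.Adj x c := by
  have hancyx : T.Ancestor x y := Relation.TransGen.single hy
  have hdy : T.depth y = T.depth x + 1 := T.depth_child _ _ hy
  have hxny : x ∉ T.subtreeSet y := by
    rintro (rfl | h)
    · omega
    · have := anc_depth T h; omega
  -- key: an edge from outside subtree y (within subtree x) into subtree y must come from x
  have key : ∀ v w : V, v ∈ T.subtreeSet x → v ∉ T.subtreeSet y → w ∈ T.subtreeSet y →
      G.Adj v w → v = x := by
    rintro v w hvx hvy hwy hadj
    rcases hvx with rfl | hvx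
    · rfl
    exfalso
    have hyw : T.Ancestor y w ∨ y = w := by
      rcases hwy with rfl | h
      · exact Or.inr rfl
      · exact Or.inl h
    have hdv : T.depth x < T.depth v := anc_depth T hvx
    rcases hT hadj with hvw | hwv
    · -- v ancestor of w; compare v and y
      have hcomp : v = y ∨ T.Ancestor v y ∨ T.Ancestor y v := by
        rcases hyw with hyw | rfl
        · exact anc_comparable T hvw hyw
        · exact Or.inr (Or.inl hvw)
      rcases hcomp with rfl | hvy' | hyv
      · exact hvy (Or.inl rfl)
      · have := anc_depth T hvy'; omega
      · exact hvy (Or.inr hyv)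
    · -- w ancestor of v, so v in subtree y
      apply hvy
      rcases hyw with hyw | rfl
      · exact Or.inr (anc_trans T hyw hwv)
      · exact Or.inr hwv
  have hyx : y ∈ T.subtreeSet x := Or.inr hancyx
  have hxx : x ∈ T.subtreeSet x := Or.inl rfl
  obtain ⟨w⟩ := (hnice x) ⟨y, hyx⟩ ⟨x, hxx⟩
  -- induct along the walk
  have main : ∀ (a b : T.subtreeSet x), (G.induce (T.subtreeSet x)).Walk a b →
      (b : V) = x → (a : V) ∈ T.subtreeSet y → ∃ c ∈ T.subtreeSet y, G.Adj x c := by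
    intro a b p
    induction p with
    | nil => intro hbx h; rw [hbx] at h; exact absurd h hxny
    | @cons a b _ hab _ ih =>
      intro hbx ha
      by_cases hb : (b : V) ∈ T.subtreeSet y
      · exact ih hbx hb
      · have : (b : V) = x := key b a b.2 hb ha hab.symm
        have hba : G.Adj (b : V) (a : V) := hab.symm
        rw [this] at hba
        exact ⟨a, ha, hba⟩
  exact main ⟨y, hyx⟩ ⟨x, hxx⟩ w rfl (Or.inl rfl)
end

section
/- The number of isomorphism classes (fixing X pointwise) of rooted forests F of height at most t in which every leaf lies in X, together with a strictly ancestor-increasing labeling h : V(F) → {1,…,t}, is at most 2^{|X|·t + |X|·log t + |X|·log |X|}. -/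
/-- A partial decomposition on the finite set `X` with height bound `t`: a rooted forest
on a node set `X ⊕ Fin m` (so `X ⊆ V(F)`), all of whose leaves lie in `X`, of height at
most `t`, together with a strictly ancestor-increasing labeling `h : V(F) → {1,…,t}`. -/
structure PartialDecomp (X : Type) (t : ℕ) where
  m : ℕ
  F : RootedForest (X ⊕ Fin m)
  leaves_mem : ∀ v, (∀ u, F.parent u ≠ some v) → ∃ x : X, v = Sum.inl x
  height_le : F.height ≤ t
  label : (X ⊕ Fin m) → ℕ
  label_pos : ∀ v, 1 ≤ label v
  label_le : ∀ v, label v ≤ t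
  label_anc : ∀ u v, F.Ancestor u v → label v < label u

/-- Equivalence of partial decompositions: a forest isomorphism fixing `X` pointwise and
preserving the labeling. -/
def PDEquiv {X : Type} {t : ℕ} (P Q : PartialDecomp X t) : Prop :=
  ∃ e : (X ⊕ Fin P.m) ≃ (X ⊕ Fin Q.m),
    (∀ x : X, e (Sum.inl x) = Sum.inl x) ∧
    (∀ v, Q.F.parent (e v) = (P.F.parent v).map e) ∧
    (∀ v, Q.label (e v) = P.label v)

/-!
Order `X` linearly. The forest is recovered, up to equivalence, from the following data for each
`x ∈ X`: the set of labels on the path from `x` to its root (at most `2^t` choices), and the lowest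
label `ℓ` at which this path meets the path of a smaller leaf, together with the least leaf `y`
whose path contains that vertex (at most `t·|X|` choices). Indeed, from label `ℓ` upwards the path
of `x` coincides with that of `y`, while below `ℓ` its vertices lie on no smaller path, so by
induction on `x` the data determine which vertices of different paths coincide, hence the forest
with its labels. This gives at most `(2^t · t · |X|)^|X|` classes.
-/

namespace PartialDecomp

open Relation

variable {X : Type} {t : ℕ}

section Paths

variable (P : PartialDecomp X t)

def ParentRel (a b : X ⊕ Fin P.m) : Prop :=
  P.F.parent a = some b

def OnPath (x : X) (v : X ⊕ Fin P.m) : Prop :=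
  ReflTransGen P.ParentRel (Sum.inl x) v

variable {P}

lemma parentRel_rightUnique : Relator.RightUnique P.ParentRel := fun _ _ _ hb hc =>
  Option.some.inj (hb.symm.trans hc)

lemma label_lt_of_transGen {u v : X ⊕ Fin P.m} (h : TransGen P.ParentRel u v) :
    P.label u < P.label v :=
  P.label_anc v u h

lemma label_le_of_reflTransGen {u v : X ⊕ Fin P.m} (h : ReflTransGen P.ParentRel u v) :
    P.label u ≤ P.label v := by
  rcases reflTransGen_iff_eq_or_transGen.1 h with rfl | h
  · rfl
  · exact (label_lt_of_transGen h).le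

lemma onPath_self (x : X) : P.OnPath x (Sum.inl x) :=
  ReflTransGen.refl

lemma OnPath.reflTransGen_of_label_le {x : X} {u v : X ⊕ Fin P.m} (hu : P.OnPath x u)
    (hv : P.OnPath x v) (h : P.label u ≤ P.label v) : ReflTransGen P.ParentRel u v := by
  rcases ReflTransGen.total_of_right_unique parentRel_rightUnique hu hv with huv | hvu
  · exact huv
  · rcases reflTransGen_iff_eq_or_transGen.1 hvu with rfl | hvu
    · exact ReflTransGen.refl
    · exact absurd h (not_le.2 (label_lt_of_transGen hvu))

lemma OnPath.eq_of_label_eq {x : X} {u v : X ⊕ Fin P.m} (hu : P.OnPath x u) (hv : P.OnPath x v)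
    (h : P.label u = P.label v) : u = v := by
  rcases reflTransGen_iff_eq_or_transGen.1 (hu.reflTransGen_of_label_le hv h.le) with huv | huv
  · exact huv.symm
  · exact absurd h (label_lt_of_transGen huv).ne

lemma exists_onPath (v : X ⊕ Fin P.m) : ∃ x, P.OnPath x v := by
  induction hn : P.label v using Nat.strong_induction_on generalizing v with
  | _ n ih =>
  by_cases hleaf : ∀ u, P.F.parent u ≠ some v
  · obtain ⟨x, rfl⟩ := P.leaves_mem v hleaf
    exact ⟨x, onPath_self x⟩
  · push Not at hleaf
    obtain ⟨u, hu⟩ := hleaf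
    obtain ⟨x, hx⟩ := ih _ (hn ▸ label_lt_of_transGen (TransGen.single hu)) u rfl
    exact ⟨x, hx.tail hu⟩

variable (P)

open Classical in
noncomputable def pathLabels (x : X) : Finset ℕ :=
  (Finset.Icc 1 t).filter fun ℓ => ∃ v, P.OnPath x v ∧ P.label v = ℓ

open Classical in
noncomputable def vertexAt (x : X) (ℓ : ℕ) : X ⊕ Fin P.m :=
  if h : ∃ v, P.OnPath x v ∧ P.label v = ℓ then h.choose else Sum.inl x

noncomputable def pathLabelsAbove (x : X) (ℓ : ℕ) : Finset ℕ :=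
  (P.pathLabels x).filter (ℓ < ·)

variable {P}

open Classical in
lemma mem_pathLabels {x : X} {ℓ : ℕ} :
    ℓ ∈ P.pathLabels x ↔ ∃ v, P.OnPath x v ∧ P.label v = ℓ := by
  rw [pathLabels, Finset.mem_filter, Finset.mem_Icc, and_iff_right_iff_imp]
  rintro ⟨v, -, rfl⟩
  exact ⟨P.label_pos v, P.label_le v⟩

open Classical in
lemma pathLabels_subset_Icc (x : X) : P.pathLabels x ⊆ Finset.Icc 1 t :=
  Finset.filter_subset _ _

lemma label_mem_pathLabels {x : X} {v : X ⊕ Fin P.m} (h : P.OnPath x v) :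
    P.label v ∈ P.pathLabels x :=
  mem_pathLabels.2 ⟨v, h, rfl⟩

lemma vertexAt_spec {x : X} {ℓ : ℕ} (h : ℓ ∈ P.pathLabels x) :
    P.OnPath x (P.vertexAt x ℓ) ∧ P.label (P.vertexAt x ℓ) = ℓ := by
  rw [mem_pathLabels] at h
  rw [vertexAt, dif_pos h]
  exact h.choose_spec

lemma vertexAt_eq {x : X} {v : X ⊕ Fin P.m} {ℓ : ℕ} (hv : P.OnPath x v) (h : P.label v = ℓ) :
    P.vertexAt x ℓ = v := by
  obtain ⟨hx, hℓ⟩ := vertexAt_spec (mem_pathLabels.2 ⟨v, hv, h⟩)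
  exact hx.eq_of_label_eq hv (hℓ.trans h.symm)

lemma label_inl_eq_min' (x : X) :
    P.label (Sum.inl x) = (P.pathLabels x).min' ⟨_, label_mem_pathLabels (onPath_self x)⟩ := by
  refine le_antisymm (Finset.le_min' _ _ _ fun ℓ hℓ => ?_)
    (Finset.min'_le _ _ (label_mem_pathLabels (onPath_self x)))
  obtain ⟨v, hv, rfl⟩ := mem_pathLabels.1 hℓ
  exact label_le_of_reflTransGen hv

lemma mem_pathLabelsAbove {x : X} {ℓ ℓ' : ℕ} :
    ℓ' ∈ P.pathLabelsAbove x ℓ ↔ ℓ' ∈ P.pathLabels x ∧ ℓ < ℓ' :=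
  Finset.mem_filter

lemma parent_vertexAt {x : X} {ℓ : ℕ} (hℓ : ℓ ∈ P.pathLabels x) :
    P.F.parent (P.vertexAt x ℓ) =
      if h : (P.pathLabelsAbove x ℓ).Nonempty then
        some (P.vertexAt x ((P.pathLabelsAbove x ℓ).min' h))
      else none := by
  obtain ⟨hv, hvℓ⟩ := vertexAt_spec hℓ
  have above : ∀ ℓ' ∈ P.pathLabelsAbove x ℓ, ∃ p, P.F.parent (P.vertexAt x ℓ) = some p ∧
      ReflTransGen P.ParentRel p (P.vertexAt x ℓ') := by
    intro ℓ' hℓ'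
    obtain ⟨hℓ'x, hlt⟩ := mem_pathLabelsAbove.1 hℓ'
    obtain ⟨hu, huℓ⟩ := vertexAt_spec hℓ'x
    rcases reflTransGen_iff_eq_or_transGen.1
      (hv.reflTransGen_of_label_le hu (by omega)) with heq | hvu
    · rw [heq] at huℓ
      omega
    · exact TransGen.head'_iff.1 hvu
  cases hp : P.F.parent (P.vertexAt x ℓ) with
  | none =>
    rw [dif_neg]
    rintro ⟨ℓ', hℓ'⟩
    obtain ⟨p, hp', -⟩ := above ℓ' hℓ'
    exact absurd (hp.symm.trans hp') (by simp)
  | some p =>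
    have hpx : P.OnPath x p := hv.tail hp
    have hmem : P.label p ∈ P.pathLabelsAbove x ℓ :=
      mem_pathLabelsAbove.2 ⟨label_mem_pathLabels hpx,
        hvℓ ▸ label_lt_of_transGen (TransGen.single hp)⟩
    have hmin : (P.pathLabelsAbove x ℓ).min' ⟨_, hmem⟩ = P.label p := by
      refine le_antisymm (Finset.min'_le _ _ hmem) (Finset.le_min' _ _ _ fun ℓ' hℓ' => ?_)
      obtain ⟨p', hp', hpu⟩ := above ℓ' hℓ'
      cases (hp.symm.trans hp')
      exact (vertexAt_spec (mem_pathLabelsAbove.1 hℓ').1).2 ▸ label_le_of_reflTransGen hpu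
    rw [dif_pos ⟨_, hmem⟩, hmin, vertexAt_eq hpx rfl]

end Paths

section Merge

variable [LinearOrder X] [WellFoundedLT X] (P : PartialDecomp X t)

noncomputable def minLeaf (v : X ⊕ Fin P.m) : X :=
  wellFounded_lt.min {x | P.OnPath x v} (exists_onPath v)

noncomputable def sharedLabels (x : X) : Finset ℕ :=
  (P.pathLabels x).filter fun ℓ => P.minLeaf (P.vertexAt x ℓ) < x

/-- If the path of `x` meets no smaller path, then `mergeLabel x = 0` and `mergeLeaf x = x`, so
`mergeLeaf x < x` says that it does. -/
noncomputable def mergeLabel (x : X) : ℕ :=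
  if h : (P.sharedLabels x).Nonempty then (P.sharedLabels x).min' h else 0

noncomputable def mergeLeaf (x : X) : X :=
  if h : (P.sharedLabels x).Nonempty then P.minLeaf (P.vertexAt x ((P.sharedLabels x).min' h))
  else x

variable {P}

lemma onPath_minLeaf (v : X ⊕ Fin P.m) : P.OnPath (P.minLeaf v) v :=
  wellFounded_lt.min_mem {x | P.OnPath x v} (exists_onPath v)

lemma minLeaf_le {x : X} {v : X ⊕ Fin P.m} (h : P.OnPath x v) : P.minLeaf v ≤ x :=
  not_lt.1 (wellFounded_lt.not_lt_min {x | P.OnPath x v} h)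

lemma vertexAt_minLeaf (v : X ⊕ Fin P.m) : P.vertexAt (P.minLeaf v) (P.label v) = v :=
  vertexAt_eq (onPath_minLeaf v) rfl

lemma mergeLeaf_lt_iff {x : X} : P.mergeLeaf x < x ↔ (P.sharedLabels x).Nonempty := by
  unfold mergeLeaf
  split_ifs with h
  · exact iff_of_true (Finset.mem_filter.1 (Finset.min'_mem _ h)).2 h
  · exact iff_of_false (lt_irrefl x) h

lemma mergeLabel_mem_pathLabels {x : X} (h : P.mergeLeaf x < x) :
    P.mergeLabel x ∈ P.pathLabels x := by
  have hne := mergeLeaf_lt_iff.1 h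
  rw [mergeLabel, dif_pos hne]
  exact (Finset.mem_filter.1 (Finset.min'_mem _ hne)).1

lemma mergeLabel_sub_one_lt (x : X) : P.mergeLabel x - 1 < t := by
  have ht : 1 ≤ t := (P.label_pos _).trans (P.label_le (Sum.inl x))
  by_cases h : P.mergeLeaf x < x
  · have := Finset.mem_Icc.1 (pathLabels_subset_Icc x (mergeLabel_mem_pathLabels h))
    omega
  · rw [mergeLabel, dif_neg (mt mergeLeaf_lt_iff.2 h)]
    omega

lemma onPath_mergeLeaf {x : X} {ℓ : ℕ} (h : P.mergeLeaf x < x) (hℓ : ℓ ∈ P.pathLabels x)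
    (hle : P.mergeLabel x ≤ ℓ) : P.OnPath (P.mergeLeaf x) (P.vertexAt x ℓ) := by
  have hne := mergeLeaf_lt_iff.1 h
  have hm := mergeLabel_mem_pathLabels h
  rw [mergeLabel, dif_pos hne] at hm hle
  rw [mergeLeaf, dif_pos hne]
  obtain ⟨hmx, hmℓ⟩ := vertexAt_spec hm
  obtain ⟨hx, hxℓ⟩ := vertexAt_spec hℓ
  exact (onPath_minLeaf _).trans (hmx.reflTransGen_of_label_le hx ((hmℓ.trans_le hle).trans_eq hxℓ.symm))

lemma minLeaf_vertexAt_eq_self {x : X} {ℓ : ℕ} (hℓ : ℓ ∈ P.pathLabels x)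
    (h : P.mergeLeaf x < x → ℓ < P.mergeLabel x) : P.minLeaf (P.vertexAt x ℓ) = x := by
  refine le_antisymm (minLeaf_le (vertexAt_spec hℓ).1) (not_lt.1 fun hlt => ?_)
  have hshared : ℓ ∈ P.sharedLabels x := Finset.mem_filter.2 ⟨hℓ, hlt⟩
  have hne : (P.sharedLabels x).Nonempty := ⟨ℓ, hshared⟩
  have := h (mergeLeaf_lt_iff.2 hne)
  rw [mergeLabel, dif_pos hne] at this
  exact absurd (Finset.min'_le _ _ hshared) (not_le.2 this)

structure Agree (P Q : PartialDecomp X t) : Prop where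
  pathLabels_eq : ∀ x, P.pathLabels x = Q.pathLabels x
  minLeaf_vertexAt_eq :
    ∀ x, ∀ ℓ ∈ P.pathLabels x, P.minLeaf (P.vertexAt x ℓ) = Q.minLeaf (Q.vertexAt x ℓ)

namespace Agree

variable {P Q : PartialDecomp X t}

lemma symm (h : Agree P Q) : Agree Q P where
  pathLabels_eq x := (h.pathLabels_eq x).symm
  minLeaf_vertexAt_eq x ℓ hℓ := (h.minLeaf_vertexAt_eq x ℓ (h.pathLabels_eq x ▸ hℓ)).symm

variable (P Q) in
noncomputable def transport (v : X ⊕ Fin P.m) : X ⊕ Fin Q.m :=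
  Q.vertexAt (P.minLeaf v) (P.label v)

lemma transport_vertexAt (h : Agree P Q) {x : X} {ℓ : ℕ} (hℓ : ℓ ∈ P.pathLabels x) :
    transport P Q (P.vertexAt x ℓ) = Q.vertexAt x ℓ := by
  obtain ⟨hQx, hQℓ⟩ := vertexAt_spec (h.pathLabels_eq x ▸ hℓ)
  have hpath : Q.OnPath (P.minLeaf (P.vertexAt x ℓ)) (Q.vertexAt x ℓ) :=
    h.minLeaf_vertexAt_eq x ℓ hℓ ▸ onPath_minLeaf _
  rw [transport, (vertexAt_spec hℓ).2]
  exact vertexAt_eq hpath hQℓ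

lemma transport_transport (h : Agree P Q) (v : X ⊕ Fin P.m) :
    transport Q P (transport P Q v) = v := by
  have hv := label_mem_pathLabels (onPath_minLeaf v)
  exact (h.symm.transport_vertexAt (h.pathLabels_eq _ ▸ hv)).trans (vertexAt_minLeaf v)

lemma label_transport (h : Agree P Q) (v : X ⊕ Fin P.m) :
    Q.label (transport P Q v) = P.label v :=
  (vertexAt_spec (h.pathLabels_eq _ ▸ label_mem_pathLabels (onPath_minLeaf v))).2

lemma transport_inl (h : Agree P Q) (x : X) : transport P Q (Sum.inl x) = Sum.inl x := by
  have hlabel : P.label (Sum.inl x) = Q.label (Sum.inl x) := by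
    simp only [label_inl_eq_min', h.pathLabels_eq x]
  rw [← vertexAt_eq (onPath_self x) rfl, h.transport_vertexAt (label_mem_pathLabels (onPath_self x)),
    hlabel, vertexAt_eq (onPath_self x) rfl]

lemma parent_transport (h : Agree P Q) (v : X ⊕ Fin P.m) :
    Q.F.parent (transport P Q v) = (P.F.parent v).map (transport P Q) := by
  have hv := label_mem_pathLabels (onPath_minLeaf v)
  have habove : P.pathLabelsAbove (P.minLeaf v) (P.label v) =
      Q.pathLabelsAbove (P.minLeaf v) (P.label v) := by
    rw [pathLabelsAbove, pathLabelsAbove, h.pathLabels_eq]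
  conv_rhs => rw [← vertexAt_minLeaf v]
  rw [transport, parent_vertexAt (h.pathLabels_eq _ ▸ hv), parent_vertexAt hv, ← habove]
  split_ifs with hne
  · rw [Option.map_some, h.transport_vertexAt (mem_pathLabelsAbove.1 (Finset.min'_mem _ hne)).1]
  · rfl

theorem pdEquiv (h : Agree P Q) : PDEquiv P Q :=
  ⟨⟨transport P Q, transport Q P, h.transport_transport, h.symm.transport_transport⟩,
    h.transport_inl, h.parent_transport, h.label_transport⟩

end Agree

/-- Paths are compared by well-founded induction on the leaf: from `mergeLabel x` upwards the path
of `x` runs along that of the smaller leaf `mergeLeaf x`, and below it `x` is its own least leaf. -/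
theorem Agree.of_mergeLeaf_eq {P Q : PartialDecomp X t} (hL : ∀ x, P.pathLabels x = Q.pathLabels x)
    (hleaf : ∀ x, P.mergeLeaf x = Q.mergeLeaf x)
    (hlabel : ∀ x, P.mergeLeaf x < x → P.mergeLabel x = Q.mergeLabel x) : Agree P Q := by
  refine ⟨hL, fun x => ?_⟩
  induction x using WellFoundedLT.induction with
  | _ x ih =>
  intro ℓ hℓ
  have hℓQ : ℓ ∈ Q.pathLabels x := hL x ▸ hℓ
  by_cases hmerged : P.mergeLeaf x < x ∧ P.mergeLabel x ≤ ℓ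
  · obtain ⟨hlt, hle⟩ := hmerged
    have hP := onPath_mergeLeaf hlt hℓ hle
    have hQ := onPath_mergeLeaf (hleaf x ▸ hlt) hℓQ (hlabel x hlt ▸ hle)
    rw [← vertexAt_eq hP (vertexAt_spec hℓ).2, ← vertexAt_eq hQ (vertexAt_spec hℓQ).2, ← hleaf x]
    exact ih _ hlt ℓ ((vertexAt_spec hℓ).2 ▸ label_mem_pathLabels hP)
  · have hbelow : P.mergeLeaf x < x → ℓ < P.mergeLabel x := fun hlt =>
      lt_of_not_ge fun hle => hmerged ⟨hlt, hle⟩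
    rw [minLeaf_vertexAt_eq_self hℓ hbelow, minLeaf_vertexAt_eq_self hℓQ fun hlt => ?_]
    rw [← hleaf x] at hlt
    exact hlabel x hlt ▸ hbelow hlt

variable (P) in
noncomputable def code (x : X) : (Fin t → Bool) × Fin t × X :=
  (fun i => decide (i.1 + 1 ∈ P.pathLabels x), ⟨P.mergeLabel x - 1, mergeLabel_sub_one_lt x⟩,
    P.mergeLeaf x)

lemma pathLabels_eq_of_code_eq {P Q : PartialDecomp X t} (h : P.code = Q.code) (x : X) :
    P.pathLabels x = Q.pathLabels x := by
  ext ℓ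
  by_cases hℓ : 1 ≤ ℓ ∧ ℓ ≤ t
  · have := congrFun (congrArg Prod.fst (congrFun h x)) ⟨ℓ - 1, by omega⟩
    simpa [code, Nat.sub_add_cancel hℓ.1] using this
  · exact iff_of_false (fun hP => hℓ (Finset.mem_Icc.1 (pathLabels_subset_Icc x hP)))
      (fun hQ => hℓ (Finset.mem_Icc.1 (pathLabels_subset_Icc x hQ)))

theorem Agree.of_code_eq {P Q : PartialDecomp X t} (h : P.code = Q.code) : Agree P Q := by
  have hleaf x : P.mergeLeaf x = Q.mergeLeaf x := congrArg (·.2.2) (congrFun h x)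
  refine .of_mergeLeaf_eq (pathLabels_eq_of_code_eq h) hleaf fun x hlt => ?_
  have hsub : P.mergeLabel x - 1 = Q.mergeLabel x - 1 := congrArg (·.2.1.val) (congrFun h x)
  have hP := Finset.mem_Icc.1 (pathLabels_subset_Icc x (mergeLabel_mem_pathLabels hlt))
  have hQ := Finset.mem_Icc.1
    (pathLabels_subset_Icc x (mergeLabel_mem_pathLabels (hleaf x ▸ hlt)))
  omega

end Merge

theorem card_quot_pdEquiv_le [Fintype X] :
    Nat.card (Quot (@PDEquiv X t)) ≤ (2 ^ t * (t * Fintype.card X)) ^ Fintype.card X := by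
  let _ : LinearOrder X := LinearOrder.lift' _ (Fintype.equivFin X).injective
  have hinj : Function.Injective fun q : Quot (@PDEquiv X t) => q.out.code := by
    intro a b h
    rw [← Quot.out_eq a, ← Quot.out_eq b]
    exact Quot.sound (Agree.of_code_eq h).pdEquiv
  simpa [Nat.card_eq_fintype_card, Fintype.card_fun, Fintype.card_prod] using
    Nat.card_le_card_of_injective _ hinj

end PartialDecomp

lemma natCast_le_two_rpow_logb (a : ℕ) : (a : ℝ) ≤ 2 ^ Real.logb 2 a := by
  rcases Nat.eq_zero_or_pos a with rfl | ha
  · simp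
  · rw [Real.rpow_logb two_pos (by norm_num) (by exact_mod_cast ha)]

lemma natCast_pow_le_two_rpow (n t : ℕ) :
    (((2 ^ t * (t * n)) ^ n : ℕ) : ℝ) ≤
      2 ^ ((n * t : ℝ) + n * Real.logb 2 t + n * Real.logb 2 n) := by
  have hexp : (n * t : ℝ) + n * Real.logb 2 t + n * Real.logb 2 n =
      (t + Real.logb 2 t + Real.logb 2 n) * n := by ring
  rw [hexp, Real.rpow_mul_natCast two_pos.le, Real.rpow_add two_pos, Real.rpow_add two_pos,
    Real.rpow_natCast, mul_assoc]
  push_cast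
  gcongr
  exacts [natCast_le_two_rpow_logb t, natCast_le_two_rpow_logb n]

/-- The number of equivalence classes (fixing `X` pointwise) of rooted forests of height
at most `t` with all leaves in `X`, equipped with a strictly ancestor-increasing labeling
into `{1,…,t}`, is at most `2^{|X|·t + |X|·log₂ t + |X|·log₂ |X|}`. -/
theorem stmt17 (X : Type) [Fintype X] (t : ℕ) :
    (Nat.card (Quot (@PDEquiv X t)) : ℝ) ≤
      2 ^ ((Fintype.card X * t : ℝ)
        + (Fintype.card X : ℝ) * Real.logb 2 t
        + (Fintype.card X : ℝ) * Real.logb 2 (Fintype.card X)) :=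
  (Nat.cast_le.2 PartialDecomp.card_quot_pdEquiv_le).trans (natCast_pow_le_two_rpow _ _)
end
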